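/- Let d ≥ 1 and n ≥ 2 be integers, let v ∈ ℤ^d have every entry coprime to n, and let δ ∈ ℤ^d. Then the sum over all unordered pairs {x,y} of distinct points of L(n,v,δ) of w(x−y)^{−50} equals (n/2)·Σ_{i=1}^{n−1} (Σ_{k=1}^d w(i·v_k/n)²)^{−25}; equivalently, the approximated wrap-around separation criterion c_WA(L(n,v,δ)) = [Σ_{x≠y pairs} w(x−y)^{−50}]^{1/50} equals [(n/2)·Σ_{i=1}^{n−1} (Σ_{k=1}^d w(i·v_k/n)²)^{−25}]^{1/50}. -/

import Mathlib

open Finset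

/-- Distance from a real number to the nearest integer: w(t) = min over z in ZZ of |t - z|. -/
noncomputable def nid (t : ℝ) : ℝ := ⨅ z : ℤ, |t - (z : ℝ)|

/-- Wrap-around distance on ℝ^d. -/
noncomputable def wdist {d : ℕ} (u : Fin d → ℝ) : ℝ := Real.sqrt (∑ k, nid (u k) ^ 2)

/-- Lattice-based Latin hypercube design
L(n,v,δ) = { z + i·v/n + δ/n + 1_d/(2n) : z ∈ ℤ^d, i ∈ ℤ } ∩ [0,1]^d. -/
def LHDset (d n : ℕ) (v : Fin d → ℤ) (δ : Fin d → ℝ) : Set (Fin d → ℝ) :=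
  {x | (∃ (z : Fin d → ℤ) (i : ℤ),
          x = fun k => (z k : ℝ) + (i : ℝ) * (v k : ℝ) / n + δ k / n + 1 / (2 * n)) ∧
       ∀ k, x k ∈ Set.Icc (0 : ℝ) 1}

/-! The design consists of the `n` points `(((i v_k + δ_k) mod n) + 1/2) / n`, `i ∈ ZMod n`,
which are distinct because some `v_k` is a unit mod `n`. As `w` is `1`-periodic, the
wrap-around distance between the points of indices `i` and `j` is that of the lattice point
`m v / n` with `m = i - j`, so translating by `i` shows that every point sees the same
distances, one for each residue `m ≠ 0`; the double sum is therefore `n` times the sum over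
`m = 1, …, n - 1`. -/

lemma nid_eq_abs_sub_round (t : ℝ) : nid t = |t - round t| :=
  le_antisymm (ciInf_le ⟨0, by rintro x ⟨z, rfl⟩; positivity⟩ (round t))
    (le_ciInf fun z => round_le t z)

lemma nid_add_intCast (t : ℝ) (m : ℤ) : nid (t + m) = nid t := by
  rw [nid_eq_abs_sub_round, nid_eq_abs_sub_round, round_add_intCast, Int.cast_add,
    add_sub_add_right_eq_sub]

lemma nid_intCast_div_eq_of_cast_eq {n : ℕ} [NeZero n] {a b : ℤ} (h : (a : ZMod n) = b) :
    nid (a / n) = nid (b / n) := by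
  obtain ⟨q, hq⟩ := (ZMod.intCast_eq_intCast_iff_dvd_sub a b n).mp h
  have hb : (b : ℝ) / n = a / n + q := by
    rw [show b = a + n * q by omega]
    push_cast
    field_simp [NeZero.ne n]
  rw [hb, nid_add_intCast]

lemma intCast_div_add_half_mem_Icc_iff {n : ℕ} [NeZero n] (A : ℤ) :
    (A : ℝ) / n + 1 / (2 * n) ∈ Set.Icc (0 : ℝ) 1 ↔ 0 ≤ A ∧ A < n := by
  have hn : (0 : ℝ) < n := by simp [Nat.pos_of_neZero n]
  have e : (A : ℝ) / n + 1 / (2 * n) = (2 * A + 1) / (2 * n) := by field_simp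
  rw [e, Set.mem_Icc, div_nonneg_iff, div_le_one (by positivity)]
  constructor
  · rintro ⟨h0 | h0, h1⟩
    · constructor
      · have : (-1 : ℝ) < A := by linarith [h0.1]
        exact_mod_cast (show (-1 : ℤ) < A by exact_mod_cast this)
      · exact_mod_cast (show (A : ℝ) < n by linarith)
    · linarith [h0.2]
  · rintro ⟨h0, h1⟩
    have h0' : (0 : ℝ) ≤ A := by exact_mod_cast h0
    have h1' : (A : ℝ) + 1 ≤ n := by exact_mod_cast h1
    exact ⟨Or.inl ⟨by linarith, by linarith⟩, by linarith⟩

noncomputable def lhdPoint {d : ℕ} (n : ℕ) (v δ : Fin d → ℤ) (i : ZMod n) :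
    Fin d → ℝ :=
  fun k => ((i * v k + δ k : ZMod n).val : ℝ) / n + 1 / (2 * n)

noncomputable def latticeSqDist {d : ℕ} (n : ℕ) (v : Fin d → ℤ) (m : ℕ) : ℝ :=
  ∑ k, nid ((m : ℝ) * (v k : ℝ) / n) ^ 2

lemma ZMod.sum_ite_eq_zero_eq_sum_Icc {M : Type*} [AddCommMonoid M] (n : ℕ) [NeZero n]
    (f : ℕ → M) :
    ∑ m : ZMod n, (if m = 0 then 0 else f m.val) = ∑ m ∈ Icc 1 (n - 1), f m := by
  rw [Finset.sum_ite, Finset.sum_const_zero, zero_add]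
  have hn := Nat.pos_of_neZero n
  refine Finset.sum_nbij' ZMod.val Nat.cast (fun m hm => ?_) (fun m hm => ?_)
    (fun m _ => ZMod.natCast_zmod_val m) (fun m hm => ?_) (fun _ _ => rfl)
  · have := (ZMod.val_ne_zero m).mpr (Finset.mem_filter.mp hm).2
    have := ZMod.val_lt m
    simp only [Finset.mem_Icc]
    omega
  · simp only [Finset.mem_Icc] at hm
    simp only [Finset.mem_filter, Finset.mem_univ, true_and, ← ZMod.val_ne_zero,
      ZMod.val_cast_of_lt (show m < n by omega)]
    omega
  · simp only [Finset.mem_Icc] at hm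
    exact ZMod.val_cast_of_lt (by omega)

lemma ZMod.val_intCast_mul_add (n : ℕ) [NeZero n] (z a b c : ℤ) :
    (((a : ZMod n) * b + c).val : ℤ) = (n * z + a * b + c) % n := by
  rw [← ZMod.val_intCast]
  push_cast
  rw [ZMod.natCast_self, zero_mul, zero_add]

section Design

variable {d : ℕ} (n : ℕ) [NeZero n] (v δ : Fin d → ℤ)

lemma LHDset_eq_range_lhdPoint :
    LHDset d n v (fun k => (δ k : ℝ)) = Set.range (lhdPoint n v δ) := by
  have hn : (n : ℝ) ≠ 0 := NeZero.ne _
  have hn' : (0 : ℤ) < n := by exact_mod_cast Nat.pos_of_neZero n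
  have coord : ∀ (z i : ℤ) (k : Fin d), (z : ℝ) + i * v k / n + δ k / n + 1 / (2 * n)
      = ((n * z + i * v k + δ k : ℤ) : ℝ) / n + 1 / (2 * n) := by
    intro z i k; push_cast; field_simp
  ext x
  constructor
  · rintro ⟨⟨z, i, rfl⟩, hbox⟩
    refine ⟨i, funext fun k => ?_⟩
    specialize hbox k
    beta_reduce at hbox ⊢
    rw [coord] at hbox ⊢
    obtain ⟨h0, h1⟩ := (intCast_div_add_half_mem_Icc_iff _).mp hbox
    have hval := ZMod.val_intCast_mul_add n (z k) i (v k) (δ k)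
    rw [Int.emod_eq_of_lt h0 h1] at hval
    simp only [lhdPoint]
    exact_mod_cast congrArg (fun A : ℤ => (A : ℝ) / n + 1 / (2 * n)) hval
  · rintro ⟨i, rfl⟩
    set z : Fin d → ℤ := fun k => -((i.val * v k + δ k) / n)
    have hz : ∀ k, n * z k + i.val * v k + δ k = (i.val * v k + δ k) % n := by
      intro k; rw [Int.emod_def]; ring
    have hval : ∀ k,
        lhdPoint n v δ i k = ((n * z k + i.val * v k + δ k : ℤ) : ℝ) / n + 1 / (2 * n) := by
      intro k
      have := ZMod.val_intCast_mul_add n (z k) i.val (v k) (δ k)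
      rw [Int.cast_natCast, ZMod.natCast_zmod_val, hz, Int.emod_emod_of_dvd _ dvd_rfl] at this
      rw [hz, ← this]
      rfl
    refine ⟨⟨z, i.val, funext fun k => ?_⟩, fun k => ?_⟩
    · rw [hval, ← coord]
    · rw [hval, intCast_div_add_half_mem_Icc_iff, hz]
      exact ⟨Int.emod_nonneg _ hn'.ne', Int.emod_lt_of_pos _ hn'⟩

lemma lhdPoint_injective {k : Fin d} (hk : IsCoprime (v k) n) :
    Function.Injective (lhdPoint n v δ) := by
  intro i j hij
  have hval := congrFun hij k
  simp only [lhdPoint, add_left_inj, div_left_inj' (NeZero.ne (n : ℝ)), Nat.cast_inj] at hval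
  have hunit : IsUnit (v k : ZMod n) := by
    have := hk.map (Int.castRingHom (ZMod n))
    simp only [eq_intCast, Int.cast_natCast, ZMod.natCast_self] at this
    exact isCoprime_zero_right.mp this
  exact hunit.mul_left_inj.mp (add_left_injective _ (ZMod.val_injective n hval))

lemma wdist_lhdPoint_sub_sq (i j : ZMod n) :
    wdist (lhdPoint n v δ i - lhdPoint n v δ j) ^ 2 = latticeSqDist n v (i - j).val := by
  rw [wdist, Real.sq_sqrt (Finset.sum_nonneg fun k _ => sq_nonneg _), latticeSqDist]
  refine Finset.sum_congr rfl fun k _ => congrArg (· ^ 2) ?_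
  have hsub : (lhdPoint n v δ i - lhdPoint n v δ j) k
      = (((i * v k + δ k).val - (j * v k + δ k).val : ℤ) : ℝ) / n := by
    simp only [Pi.sub_apply, lhdPoint]
    push_cast
    ring
  rw [hsub]
  convert nid_intCast_div_eq_of_cast_eq (n := n) (b := (i - j).val * v k) ?_ using 2
  · push_cast; rfl
  · push_cast
    simp only [ZMod.natCast_zmod_val]
    ring

lemma sum_pairs_lhdPoint {k : Fin d} (hk : IsCoprime (v k) n) (p : ℕ) :
    ∑ᶠ x ∈ Set.range (lhdPoint n v δ), ∑ᶠ y ∈ Set.range (lhdPoint n v δ),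
        (if x = y then 0 else (wdist (x - y) ^ (2 * p))⁻¹)
      = n * ∑ m ∈ Icc 1 (n - 1), (latticeSqDist n v m ^ p)⁻¹ := by
  have hinj := lhdPoint_injective n v δ hk
  set T : ZMod n → ℝ := fun m => if m = 0 then 0 else (latticeSqDist n v m.val ^ p)⁻¹
  have hterm : ∀ i j, (if lhdPoint n v δ i = lhdPoint n v δ j then (0 : ℝ)
      else (wdist (lhdPoint n v δ i - lhdPoint n v δ j) ^ (2 * p))⁻¹) = T (i - j) := by
    intro i j
    simp only [T, hinj.eq_iff, sub_eq_zero, pow_mul, wdist_lhdPoint_sub_sq]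
  have htrans : ∀ i, ∑ j, T (i - j) = ∑ m, T m := fun i => Equiv.sum_comp (Equiv.subLeft i) T
  simp only [finsum_mem_range hinj, finsum_eq_sum_of_fintype, hterm, htrans, Finset.sum_const,
    Finset.card_univ, ZMod.card, nsmul_eq_mul]
  exact congrArg (_ * ·)
    (ZMod.sum_ite_eq_zero_eq_sum_Icc n fun m => (latticeSqDist n v m ^ p)⁻¹)

end Design

/-- the sum over unordered pairs of distinct points of L(n,v,δ) of
w(x−y)^{−50} equals (n/2)·Σ_{i=1}^{n−1} (Σ_k w(i·v_k/n)²)^{−25}; equivalently for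
the criterion c_WA, the corresponding 1/50-th powers are equal. -/
theorem stmt_4 (d n : ℕ) (hd : 1 ≤ d) (hn : 2 ≤ n) (v δ : Fin d → ℤ)
    (hco : ∀ k, IsCoprime (v k) (n : ℤ))
    (S : Set (Fin d → ℝ)) (hS : S = LHDset d n v (fun k => (δ k : ℝ))) :
    (1 / 2 : ℝ) * ∑ᶠ x ∈ S, ∑ᶠ y ∈ S, (if x = y then 0 else (wdist (x - y) ^ 50)⁻¹)
        = (n / 2 : ℝ) * ∑ i ∈ Finset.Icc 1 (n - 1),
            ((∑ k, nid ((i : ℝ) * (v k : ℝ) / n) ^ 2) ^ 25)⁻¹ ∧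
    ((1 / 2 : ℝ) * ∑ᶠ x ∈ S, ∑ᶠ y ∈ S,
        (if x = y then 0 else (wdist (x - y) ^ 50)⁻¹)) ^ ((1 : ℝ) / 50)
      = ((n / 2 : ℝ) * ∑ i ∈ Finset.Icc 1 (n - 1),
            ((∑ k, nid ((i : ℝ) * (v k : ℝ) / n) ^ 2) ^ 25)⁻¹) ^ ((1 : ℝ) / 50) := by
  have : NeZero n := ⟨by omega⟩
  have hsum : (1 / 2 : ℝ) * ∑ᶠ x ∈ S, ∑ᶠ y ∈ S, (if x = y then 0 else (wdist (x - y) ^ 50)⁻¹)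
      = (n / 2 : ℝ) * ∑ i ∈ Finset.Icc 1 (n - 1),
          ((∑ k, nid ((i : ℝ) * (v k : ℝ) / n) ^ 2) ^ 25)⁻¹ := by
    rw [hS, LHDset_eq_range_lhdPoint, show (50 : ℕ) = 2 * 25 from rfl,
      sum_pairs_lhdPoint n v δ (hco ⟨0, hd⟩)]
    simp only [latticeSqDist]
    ring
  exact ⟨hsum, by rw [hsum]⟩
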